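/- arXiv:1507.05609 — 3 statements merged into one kernel-verified Lean document; each statement's English description precedes it below -/
import Mathlib

section
/- Let ξ ∈ ℝⁿ and p_b be a strictly positive probability vector, and define the log-moment-generating function φ_ξ(β) = log Σⱼ p_{b,j} e^{β ξⱼ}. Let M = argminⱼ ξⱼ. Then as β → −∞, the function g(β) := β φ_ξ'(β) − φ_ξ(β) converges to −log Σ_{j∈M} p_{b,j}; moreover g(0) = 0, so if η < −log Σ_{j∈M} p_{b,j} and the ξⱼ are not all equal, there exists β < 0 with g(β) = η. -/
open Finset Real Filter

/-!
Shifting `ξ` by a constant `c` multiplies `Σⱼ p_j e^{βξⱼ}` by `e^{βc}` and so leaves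
`g(β) = β φ'(β) − φ(β)` unchanged; hence we may assume `min ξ = 0`. Then, as `β → −∞`,
`Σⱼ p_j e^{βξⱼ} → p(M)` and `β φ'(β) = Σⱼ p_j (βξⱼ) e^{βξⱼ} / Σⱼ p_j e^{βξⱼ} → 0`,
because `x eˣ → 0` as `x → −∞`. So `g → −log p(M)`, while `g(0) = −log Σⱼ p_j = 0`,
and the intermediate value theorem on `[β₀, 0]` produces the root.
-/

noncomputable section TiltedFamily

variable {ι : Type*} [Fintype ι] (p ξ : ι → ℝ)

def expSum (β : ℝ) : ℝ := ∑ j, p j * exp (β * ξ j)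

def tiltedMean (β : ℝ) : ℝ := expSum (fun j => p j * ξ j) ξ β / expSum p ξ β

/-- `β φ'(β) − φ(β)` for `φ = log ∘ expSum p ξ`, whose derivative is `tiltedMean p ξ`: the
Kullback–Leibler divergence from `p` of the tilted distribution `p_j e^{βξⱼ} / expSum p ξ β`. -/
def tiltedDivergence (β : ℝ) : ℝ := β * tiltedMean p ξ β - log (expSum p ξ β)

theorem expSum_pos [Nonempty ι] {p : ι → ℝ} (hp : ∀ j, 0 < p j) (β : ℝ) :
    0 < expSum p ξ β :=
  sum_pos (fun j _ => mul_pos (hp j) (exp_pos _)) univ_nonempty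

theorem hasDerivAt_expSum (β : ℝ) :
    HasDerivAt (expSum p ξ) (expSum (fun j => p j * ξ j) ξ β) β := by
  refine (HasDerivAt.fun_sum fun j _ =>
    (((hasDerivAt_id β).mul_const (ξ j)).exp).const_mul (p j)).congr_deriv ?_
  simp only [expSum, id, one_mul]
  exact sum_congr rfl fun j _ => by ring

theorem continuous_expSum : Continuous (expSum p ξ) :=
  continuous_iff_continuousAt.2 fun β => (hasDerivAt_expSum p ξ β).continuousAt

theorem hasDerivAt_log_expSum [Nonempty ι] {p : ι → ℝ} (hp : ∀ j, 0 < p j) (β : ℝ) :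
    HasDerivAt (fun β => log (expSum p ξ β)) (tiltedMean p ξ β) β :=
  (hasDerivAt_expSum p ξ β).log (expSum_pos ξ hp β).ne'

theorem continuous_tiltedDivergence [Nonempty ι] {p : ι → ℝ} (hp : ∀ j, 0 < p j) :
    Continuous (tiltedDivergence p ξ) := by
  have hne : ∀ β, expSum p ξ β ≠ 0 := fun β => (expSum_pos ξ hp β).ne'
  exact (continuous_id.mul ((continuous_expSum _ ξ).div (continuous_expSum p ξ) hne)).sub
    ((continuous_expSum p ξ).log hne)

theorem tiltedDivergence_zero : tiltedDivergence p ξ 0 = -log (∑ j, p j) := by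
  simp [tiltedDivergence, expSum]

theorem expSum_add_const (c β : ℝ) :
    expSum p (fun j => ξ j + c) β = exp (β * c) * expSum p ξ β := by
  simp only [expSum, mul_sum, mul_add, exp_add]
  exact sum_congr rfl fun j _ => by ring

theorem tiltedDivergence_add_const [Nonempty ι] {p : ι → ℝ} (hp : ∀ j, 0 < p j) (c : ℝ) :
    tiltedDivergence p (fun j => ξ j + c) = tiltedDivergence p ξ := by
  funext β
  have hS := (expSum_pos ξ hp β).ne'
  have hnum : expSum (fun j => p j * (ξ j + c)) (fun j => ξ j + c) β
      = exp (β * c) * (expSum (fun j => p j * ξ j) ξ β + c * expSum p ξ β) := by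
    rw [expSum_add_const]
    simp only [expSum, mul_sum, ← sum_add_distrib]
    exact sum_congr rfl fun j _ => by ring
  have hmean : tiltedMean p (fun j => ξ j + c) β = tiltedMean p ξ β + c := by
    rw [tiltedMean, tiltedMean, hnum, expSum_add_const, mul_div_mul_left _ _ (exp_ne_zero _),
      add_div, mul_div_cancel_right₀ _ hS]
  rw [tiltedDivergence, tiltedDivergence, hmean, expSum_add_const,
    log_mul (exp_ne_zero _) hS, log_exp]
  ring

theorem tendsto_expSum_atBot (hξ : ∀ j, 0 ≤ ξ j) :
    Tendsto (expSum p ξ) atBot (nhds (∑ j with ξ j = 0, p j)) := by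
  rw [sum_filter]
  refine tendsto_finsetSum _ fun j _ => ?_
  split_ifs with hj
  · simp [hj]
  · have hlim := (tendsto_exp_atBot.comp
      (tendsto_id.atBot_mul_const ((hξ j).lt_of_ne' hj))).const_mul (p j)
    simpa using hlim

theorem tendsto_mul_expSum_mul_atBot (hξ : ∀ j, 0 ≤ ξ j) :
    Tendsto (fun β => β * expSum (fun j => p j * ξ j) ξ β) atBot (nhds 0) := by
  have hxexp : Tendsto (fun x => x * exp x) atBot (nhds 0) := by
    simpa using ((tendsto_pow_mul_exp_neg_atTop_nhds_zero 1).comp tendsto_neg_atBot_atTop).neg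
  simp only [expSum, mul_sum]
  rw [← sum_const_zero (s := (univ : Finset ι))]
  refine tendsto_finsetSum _ fun j _ => ?_
  rcases (hξ j).eq_or_lt with hj | hj
  · simp [← hj]
  · have hlim := (hxexp.comp (tendsto_id.atBot_mul_const hj)).const_mul (p j)
    simp only [Function.comp_def, id, mul_zero] at hlim
    exact hlim.congr fun β => by ring

theorem tendsto_tiltedDivergence_atBot_of_nonneg {p : ι → ℝ} (hp : ∀ j, 0 < p j)
    (hξ : ∀ j, 0 ≤ ξ j) (hzero : ∃ j, ξ j = 0) :
    Tendsto (tiltedDivergence p ξ) atBot (nhds (-log (∑ j with ξ j = 0, p j))) := by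
  obtain ⟨j₀, hj₀⟩ := hzero
  have hQ : (∑ j with ξ j = 0, p j) ≠ 0 :=
    (sum_pos (fun j _ => hp j) ⟨j₀, mem_filter.2 ⟨mem_univ _, hj₀⟩⟩).ne'
  have hS := tendsto_expSum_atBot p ξ hξ
  have hlim := ((tendsto_mul_expSum_mul_atBot p ξ hξ).div hS hQ).sub (hS.log hQ)
  rw [zero_div, zero_sub] at hlim
  exact hlim.congr fun β => by
    rw [Pi.div_apply, tiltedDivergence, tiltedMean, mul_div_assoc]

theorem tendsto_tiltedDivergence_atBot [Nonempty ι] {p : ι → ℝ} (hp : ∀ j, 0 < p j)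
    (M : Finset ι) (hM : ∀ j, j ∈ M ↔ ∀ j', ξ j ≤ ξ j') :
    Tendsto (tiltedDivergence p ξ) atBot (nhds (-log (∑ j ∈ M, p j))) := by
  obtain ⟨j₀, hj₀⟩ := Finite.exists_min ξ
  have hshift : tiltedDivergence p ξ = tiltedDivergence p (fun j => ξ j - ξ j₀) := by
    simpa using tiltedDivergence_add_const (fun j => ξ j - ξ j₀) hp (ξ j₀)
  have hMeq : M = ({j | ξ j - ξ j₀ = 0} : Finset ι) := by
    ext j
    rw [hM, mem_filter, sub_eq_zero]
    exact ⟨fun h => ⟨mem_univ _, le_antisymm (h j₀) (hj₀ j)⟩, fun h j' => h.2 ▸ hj₀ j'⟩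
  rw [hshift, hMeq]
  exact tendsto_tiltedDivergence_atBot_of_nonneg _ hp (fun j => sub_nonneg.2 (hj₀ j))
    ⟨j₀, sub_self _⟩

end TiltedFamily

theorem exists_neg_eq_of_tendsto_atBot {f : ℝ → ℝ} (hf : Continuous f) (h0 : f 0 = 0) {L : ℝ}
    (hL : Tendsto f atBot (nhds L)) {η : ℝ} (hη0 : 0 < η) (hηL : η < L) :
    ∃ β < 0, f β = η := by
  obtain ⟨β₀, hβ₀η, hβ₀neg⟩ :=
    ((hL.eventually (lt_mem_nhds hηL)).and (eventually_lt_atBot 0)).exists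
  obtain ⟨β, hβ, hfβ⟩ := intermediate_value_Icc' hβ₀neg.le hf.continuousOn
    ⟨by rw [h0]; exact hη0.le, hβ₀η.le⟩
  refine ⟨β, hβ.2.lt_of_ne ?_, hfβ⟩
  rintro rfl
  exact hη0.ne' (hfβ.symm.trans h0)

theorem log_mgf_root_existence_general
    {n : ℕ} (ξ : Fin n → ℝ) (pb : Fin n → ℝ)
    (hpb_pos : ∀ j, 0 < pb j) (hpb_sum : ∑ j, pb j = 1)
    (φξ : ℝ → ℝ)
    (hφξ : ∀ β, φξ β = Real.log (∑ j, pb j * Real.exp (β * ξ j)))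
    (g : ℝ → ℝ) (hg : ∀ β, g β = β * deriv φξ β - φξ β)
    (M : Finset (Fin n))
    (hMdef : ∀ j, j ∈ M ↔ ∀ j', ξ j ≤ ξ j') :
    Tendsto g atBot (nhds (-Real.log (∑ j ∈ M, pb j))) ∧
    g 0 = 0 ∧
    (∀ η : ℝ, η < -Real.log (∑ j ∈ M, pb j) → 0 < η →
      (¬ ∀ j j' : Fin n, ξ j = ξ j') →
      ∃ β : ℝ, β < 0 ∧ g β = η) := by
  have : Nonempty (Fin n) :=
    univ_nonempty_iff.1 (nonempty_of_sum_ne_zero (hpb_sum ▸ one_ne_zero))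
  have hφ : φξ = fun β => log (expSum pb ξ β) := funext hφξ
  obtain rfl : g = tiltedDivergence pb ξ := funext fun β => by
    rw [hg, hφ, (hasDerivAt_log_expSum ξ hpb_pos β).deriv]; rfl
  have hlim := tendsto_tiltedDivergence_atBot ξ hpb_pos M hMdef
  have h0 : tiltedDivergence pb ξ 0 = 0 := by
    rw [tiltedDivergence_zero, hpb_sum, log_one, neg_zero]
  exact ⟨hlim, h0, fun η hηL hη0 _ =>
    exists_neg_eq_of_tendsto_atBot (continuous_tiltedDivergence ξ hpb_pos) h0 hlim hη0 hηL⟩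

/-- Behavior of `g(β) = β φ'_ξ(β) − φ_ξ(β)` for the log-moment-generating function
`φ_ξ(β) = log Σⱼ p_{b,j} e^{βξⱼ}`: as `β → −∞`, `g(β) → −log Σ_{j∈M} p_{b,j}` where `M` is the
argmin set of `ξ`; also `g(0) = 0`, so for any `η` strictly between these values (and `ξ` not
constant) there is a negative root `g(β) = η`. -/
theorem log_mgf_root_existence
    {n : ℕ} (hn : 0 < n) (ξ : Fin n → ℝ) (pb : Fin n → ℝ)
    (hpb_pos : ∀ j, 0 < pb j) (hpb_sum : ∑ j, pb j = 1)
    (φξ : ℝ → ℝ)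
    (hφξ : ∀ β, φξ β = Real.log (∑ j, pb j * Real.exp (β * ξ j)))
    (g : ℝ → ℝ) (hg : ∀ β, g β = β * deriv φξ β - φξ β)
    (M : Finset (Fin n))
    (hMdef : ∀ j, j ∈ M ↔ ∀ j', ξ j ≤ ξ j') :
    Tendsto g atBot (nhds (-Real.log (∑ j ∈ M, pb j))) ∧
    g 0 = 0 ∧
    (∀ η : ℝ, η < -Real.log (∑ j ∈ M, pb j) → 0 < η →
      (¬ ∀ j j' : Fin n, ξ j = ξ j') →
      ∃ β : ℝ, β < 0 ∧ g β = η) :=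
  log_mgf_root_existence_general ξ pb hpb_pos hpb_sum φξ hφξ g hg M hMdef
end

section
/- For ω ∈ [0,1), ρ > 1 and ζ > 0, the function f(a, β) = min{a(1−ω), (β − ρa − ζ − 2)/2, 1} / (β + 1) over a > 0, β > 0 is maximized at a = 1/(1−ω), β = ρ/(1−ω) + ζ + 4, with maximum value 1/(ρ/(1−ω) + ζ + 5). -/
/-!
Write `c = 1 - ω` and let `m` be the minimum. The first entry gives `a ≥ m / c`,
so the second entry gives `β + 1 ≥ 2m + ρ m / c + ζ + 3 ≥ m (ρ / c + ζ + 5)` because `m ≤ 1`;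
hence `m / (β + 1) ≤ 1 / (ρ / c + ζ + 5)`. At `a = 1 / c`, `β = ρ / c + ζ + 4` all three entries
equal `1`, so the bound is attained.
-/

section RateExponent

variable {c ρ ζ a β : ℝ}

lemma min_three_mul_le_add_one (hc : 0 < c) (hρ : 0 ≤ ρ) (hζ : -3 ≤ ζ) :
    min (min (a * c) ((β - ρ * a - ζ - 2) / 2)) 1 * (ρ / c + ζ + 5) ≤ β + 1 := by
  set m := min (min (a * c) ((β - ρ * a - ζ - 2) / 2)) 1
  have hma : m / c ≤ a :=
    (div_le_iff₀ hc).mpr ((min_le_left _ _).trans (min_le_left _ _))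
  have hmβ : m ≤ (β - ρ * a - ζ - 2) / 2 := (min_le_left _ _).trans (min_le_right _ _)
  have hm1 : m ≤ 1 := min_le_right _ _
  calc m * (ρ / c + ζ + 5) = ρ * (m / c) + m * (ζ + 3) + 2 * m := by ring
    _ ≤ ρ * a + 1 * (ζ + 3) + 2 * m := by gcongr; linarith
    _ ≤ β + 1 := by linarith

lemma min_three_div_le (hc : 0 < c) (hρ : 0 ≤ ρ) (hζ : -3 ≤ ζ) (hβ : -1 < β) :
    min (min (a * c) ((β - ρ * a - ζ - 2) / 2)) 1 / (β + 1) ≤ 1 / (ρ / c + ζ + 5) := by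
  have hρc : 0 ≤ ρ / c := div_nonneg hρ hc.le
  rw [div_le_div_iff₀ (by linarith) (by linarith), one_mul]
  exact min_three_mul_le_add_one hc hρ hζ

lemma min_three_at_optimum (hc : c ≠ 0) :
    min (min (1 / c * c) ((ρ / c + ζ + 4 - ρ * (1 / c) - ζ - 2) / 2)) 1 = 1 := by
  have hfirst : 1 / c * c = 1 := one_div_mul_cancel hc
  have hsecond : (ρ / c + ζ + 4 - ρ * (1 / c) - ζ - 2) / 2 = 1 := by ring
  rw [hfirst, hsecond, min_self, min_self]

end RateExponent

theorem rate_exponent_maximizer_general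
    (ω ρ ζ : ℝ) (hω1 : ω < 1) (hρ : 1 < ρ) (hζ : 0 < ζ)
    (f : ℝ → ℝ → ℝ)
    (hf : ∀ a β, f a β =
      min (min (a * (1 - ω)) ((β - ρ * a - ζ - 2) / 2)) 1 / (β + 1)) :
    (∀ a β : ℝ, 0 < a → 0 < β → f a β ≤ 1 / (ρ / (1 - ω) + ζ + 5)) ∧
    f (1 / (1 - ω)) (ρ / (1 - ω) + ζ + 4) = 1 / (ρ / (1 - ω) + ζ + 5) := by
  have hc : 0 < 1 - ω := by linarith
  refine ⟨fun a β _ hβ => ?_, ?_⟩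
  · rw [hf]
    exact min_three_div_le hc (by linarith) (by linarith) (by linarith)
  · rw [hf, min_three_at_optimum hc.ne']
    ring

/-- Optimal tuning of step-size and sample-size parameters (Lemma: index max):
`f(a,β) = min{a(1−ω), (β − ρa − ζ − 2)/2, 1}/(β+1)` over `a, β > 0` is maximized at
`a = 1/(1−ω)`, `β = ρ/(1−ω) + ζ + 4`, with maximum value `1/(ρ/(1−ω) + ζ + 5)`. -/
theorem rate_exponent_maximizer
    (ω ρ ζ : ℝ) (hω0 : 0 ≤ ω) (hω1 : ω < 1) (hρ : 1 < ρ) (hζ : 0 < ζ)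
    (f : ℝ → ℝ → ℝ)
    (hf : ∀ a β, f a β =
      min (min (a * (1 - ω)) ((β - ρ * a - ζ - 2) / 2)) 1 / (β + 1)) :
    (∀ a β : ℝ, 0 < a → 0 < β → f a β ≤ 1 / (ρ / (1 - ω) + ζ + 5)) ∧
    f (1 / (1 - ω)) (ρ / (1 - ω) + ζ + 4) = 1 / (ρ / (1 - ω) + ζ + 5) :=
  rate_exponent_maximizer_general ω ρ ζ hω1 hρ hζ f hf
end

section
/- For ω ∈ [0,1), ρ > 1 and ζ > 0, the function f(a, β) = min{a(1−ω), β − ρa − ζ − 1, 1} / (β + 1) over a > 0, β > 0 is maximized at a = 1/(1−ω), β = ρ/(1−ω) + ζ + 2, with maximum value 1/(ρ/(1−ω) + ζ + 3). -/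
/-!
Write `m` for the minimum and `c = 1 - ω`. From `m ≤ a c` we get `ρ m / c ≤ ρ a`, and from
`m ≤ 1` we get `m (ζ + 2) ≤ ζ + 2`; adding `m ≤ β - ρ a - ζ - 1` gives
`m (ρ / c + ζ + 3) ≤ β + 1`, the upper bound. At `a = 1 / c`, `β = ρ / c + ζ + 2` all three
terms of the minimum equal `1`, so the bound is attained.
-/

noncomputable def rateExponent (c ρ ζ a β : ℝ) : ℝ :=
  min (min (a * c) (β - ρ * a - ζ - 1)) 1 / (β + 1)

section RateExponent

variable {c ρ ζ a β m : ℝ}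

lemma mul_le_of_le_rate_terms (hc : 0 < c) (hρ : 0 ≤ ρ) (hζ : -2 ≤ ζ)
    (hma : m ≤ a * c) (hmβ : m ≤ β - ρ * a - ζ - 1) (hm1 : m ≤ 1) :
    m * (ρ / c + ζ + 3) ≤ β + 1 := by
  have hρm : ρ * (m / c) ≤ ρ * a :=
    mul_le_mul_of_nonneg_left ((div_le_iff₀ hc).2 hma) hρ
  have hmζ : m * (ζ + 2) ≤ ζ + 2 := by nlinarith
  calc m * (ρ / c + ζ + 3) = ρ * (m / c) + m * (ζ + 2) + m := by ring
    _ ≤ ρ * a + (ζ + 2) + (β - ρ * a - ζ - 1) := by gcongr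
    _ = β + 1 := by ring

lemma rateExponent_le (hc : 0 < c) (hρ : 0 ≤ ρ) (hζ : -2 ≤ ζ) (hβ : 0 < β + 1) :
    rateExponent c ρ ζ a β ≤ 1 / (ρ / c + ζ + 3) := by
  have hD : 0 < ρ / c + ζ + 3 := by
    have : 0 ≤ ρ / c := div_nonneg hρ hc.le
    linarith
  rw [rateExponent, div_le_div_iff₀ hβ hD, one_mul]
  exact mul_le_of_le_rate_terms hc hρ hζ
    ((min_le_left _ _).trans (min_le_left _ _))
    ((min_le_left _ _).trans (min_le_right _ _)) (min_le_right _ _)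

lemma rateExponent_optimum (hc : c ≠ 0) :
    rateExponent c ρ ζ (1 / c) (ρ / c + ζ + 2) = 1 / (ρ / c + ζ + 3) := by
  have hterm₁ : 1 / c * c = 1 := one_div_mul_cancel hc
  have hterm₂ : ρ / c + ζ + 2 - ρ * (1 / c) - ζ - 1 = 1 := by ring
  rw [rateExponent, hterm₁, hterm₂, min_self, min_self]
  ring

end RateExponent

theorem rate_exponent_maximizer_relaxed_general
    (ω ρ ζ : ℝ) (hω1 : ω < 1) (hρ : 1 < ρ) (hζ : 0 < ζ)
    (f : ℝ → ℝ → ℝ)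
    (hf : ∀ a β, f a β =
      min (min (a * (1 - ω)) (β - ρ * a - ζ - 1)) 1 / (β + 1)) :
    (∀ a β : ℝ, 0 < a → 0 < β → f a β ≤ 1 / (ρ / (1 - ω) + ζ + 3)) ∧
    f (1 / (1 - ω)) (ρ / (1 - ω) + ζ + 2) = 1 / (ρ / (1 - ω) + ζ + 3) := by
  have hc : 0 < 1 - ω := sub_pos.2 hω1
  have hf' : f = rateExponent (1 - ω) ρ ζ := funext₂ hf
  subst hf'
  exact ⟨fun _ _ _ hβ ↦ rateExponent_le hc (by linarith) (by linarith) (by linarith),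
    rateExponent_optimum hc.ne'⟩

/-- Optimal tuning under the relaxed Lipschitz assumption (Lemma: index max1):
`f(a,β) = min{a(1−ω), β − ρa − ζ − 1, 1}/(β+1)` over `a, β > 0` is maximized at
`a = 1/(1−ω)`, `β = ρ/(1−ω) + ζ + 2`, with maximum value `1/(ρ/(1−ω) + ζ + 3)`. -/
theorem rate_exponent_maximizer_relaxed
    (ω ρ ζ : ℝ) (hω0 : 0 ≤ ω) (hω1 : ω < 1) (hρ : 1 < ρ) (hζ : 0 < ζ)
    (f : ℝ → ℝ → ℝ)
    (hf : ∀ a β, f a β =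
      min (min (a * (1 - ω)) (β - ρ * a - ζ - 1)) 1 / (β + 1)) :
    (∀ a β : ℝ, 0 < a → 0 < β → f a β ≤ 1 / (ρ / (1 - ω) + ζ + 3)) ∧
    f (1 / (1 - ω)) (ρ / (1 - ω) + ζ + 2) = 1 / (ρ / (1 - ω) + ζ + 3) :=
  rate_exponent_maximizer_relaxed_general ω ρ ζ hω1 hρ hζ f hf
end
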